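/- Let 0 ≤ a ≤ a₂ ≤ 1, 0 ≤ e ≤ 1 with max{a, a₂²} ≤ 1 - e ≤ a₂, and define for odd k ≥ 3: T_k = (1-e)(1 - S_{k+2}) + a₂² a² S_k and V_k = e a₂² a² S_{k-2}, where S_k = ∑_{j=0}^{s-1} a₂^{2j} a^{2(s-1-j)} with k-1 = 2s (and S_1 = 0). Then T_k ≥ V_k ≥ 0 for all odd k ≥ 3. -/

import Mathlib

/-!
Write `x = a²`, `y = a₂²`, `b = 1 - e`. The recursion `S_{n+1} = yⁿ + x S_n` and the telescoping
`(y - x) S_n = yⁿ - xⁿ` turn `T - V` into `b (1 - xˢ) - y (1 - x) S_s + e yˢ`. Since `y ≤ b` and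
`(1 - x) S_s ≤ (1 - x)(1 + x + ⋯ + x^{s-1}) = 1 - xˢ`, this is nonnegative.
-/

open Finset

/-- The symmetric polynomial `S_k = ∑_{j=0}^{s-1} a₂^{2j} a^{2(s-1-j)}`, indexed by `s`
where `k - 1 = 2s` (so odd `k ≥ 3` corresponds to `s ≥ 1`, and `S_1 = 0`). -/
def Ssum (a a₂ : ℝ) (s : ℕ) : ℝ :=
  ∑ j ∈ Finset.range s, a₂ ^ (2 * j) * a ^ (2 * (s - 1 - j))

section Ssum

variable (a a₂ : ℝ)

theorem Ssum_eq_geom_sum₂ (s : ℕ) :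
    Ssum a a₂ s = ∑ i ∈ range s, (a₂ ^ 2) ^ i * (a ^ 2) ^ (s - 1 - i) := by
  simp only [Ssum, pow_mul]

theorem Ssum_nonneg (s : ℕ) : 0 ≤ Ssum a a₂ s := by
  rw [Ssum_eq_geom_sum₂]
  positivity

theorem Ssum_succ (s : ℕ) : Ssum a a₂ (s + 1) = (a₂ ^ 2) ^ s + a ^ 2 * Ssum a a₂ s := by
  rw [Ssum_eq_geom_sum₂, Ssum_eq_geom_sum₂, Nat.add_sub_cancel, geom_sum₂_succ_eq]

theorem sq_sub_sq_mul_Ssum (s : ℕ) :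
    (a₂ ^ 2 - a ^ 2) * Ssum a a₂ s = (a₂ ^ 2) ^ s - (a ^ 2) ^ s := by
  rw [Ssum_eq_geom_sum₂, mul_comm, geom_sum₂_mul]

theorem Ssum_le_Ssum {b c : ℝ} (h : b ^ 2 ≤ c ^ 2) (s : ℕ) : Ssum a b s ≤ Ssum a c s := by
  rw [Ssum_eq_geom_sum₂, Ssum_eq_geom_sum₂]
  gcongr

end Ssum

theorem one_sub_sq_mul_Ssum_le {a a₂ : ℝ} (ha : a ^ 2 ≤ 1) (ha₂ : a₂ ^ 2 ≤ 1) (s : ℕ) :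
    (1 - a ^ 2) * Ssum a a₂ s ≤ 1 - (a ^ 2) ^ s := by
  have h := sq_sub_sq_mul_Ssum a 1 s
  rw [one_pow, one_pow] at h
  rw [← h]
  exact mul_le_mul_of_nonneg_left (Ssum_le_Ssum a (by rwa [one_pow]) s) (by linarith)

theorem T_ge_V_ge_zero_general (a a₂ e : ℝ) (ha0 : 0 ≤ a)
    (he0 : 0 ≤ e)
    (hmax : max a (a₂ ^ 2) ≤ 1 - e) :
    ∀ s : ℕ, 1 ≤ s →
      0 ≤ e * a₂ ^ 2 * a ^ 2 * Ssum a a₂ (s - 1) ∧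
      e * a₂ ^ 2 * a ^ 2 * Ssum a a₂ (s - 1) ≤
        (1 - e) * (1 - Ssum a a₂ (s + 1)) + a₂ ^ 2 * a ^ 2 * Ssum a a₂ s := by
  intro s hs
  obtain ⟨t, rfl⟩ := Nat.exists_eq_add_of_le' hs
  rw [Nat.add_sub_cancel]
  refine ⟨by have := Ssum_nonneg a a₂ t; positivity, ?_⟩
  obtain ⟨ha, hy⟩ := max_le_iff.1 hmax
  have hx : a ^ 2 ≤ 1 := pow_le_one₀ ha0 (by linarith)
  set S := Ssum a a₂ (t + 1)
  have hTV : (1 - e) * (1 - Ssum a a₂ (t + 1 + 1)) + a₂ ^ 2 * a ^ 2 * S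
      - e * a₂ ^ 2 * a ^ 2 * Ssum a a₂ t
      = (1 - e) * (1 - (a ^ 2) ^ (t + 1)) - a₂ ^ 2 * ((1 - a ^ 2) * S) + e * (a₂ ^ 2) ^ (t + 1) := by
    linear_combination (e - 1) * Ssum_succ a a₂ (t + 1) + e * a₂ ^ 2 * Ssum_succ a a₂ t
      + (1 - e) * sq_sub_sq_mul_Ssum a a₂ (t + 1)
  have hS : (1 - a ^ 2) * S ≤ 1 - (a ^ 2) ^ (t + 1) :=
    one_sub_sq_mul_Ssum_le hx (by linarith) _
  have hyS : a₂ ^ 2 * ((1 - a ^ 2) * S) ≤ (1 - e) * ((1 - a ^ 2) * S) :=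
    mul_le_mul_of_nonneg_right hy (mul_nonneg (by linarith) (Ssum_nonneg a a₂ _))
  have hbS : (1 - e) * ((1 - a ^ 2) * S) ≤ (1 - e) * (1 - (a ^ 2) ^ (t + 1)) :=
    mul_le_mul_of_nonneg_left hS (by linarith)
  have : 0 ≤ e * (a₂ ^ 2) ^ (t + 1) := by positivity
  linarith

/-- With `0 ≤ a ≤ a₂ ≤ 1`, `0 ≤ e ≤ 1`, `max{a, a₂²} ≤ 1 - e ≤ a₂`, and for odd `k ≥ 3`
(i.e. `s ≥ 1`) `T_k = (1-e)(1 - S_{k+2}) + a₂² a² S_k`, `V_k = e a₂² a² S_{k-2}`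
(with `S_1 = 0`), one has `T_k ≥ V_k ≥ 0`. -/
theorem T_ge_V_ge_zero (a a₂ e : ℝ) (ha0 : 0 ≤ a) (hle : a ≤ a₂) (ha₂ : a₂ ≤ 1)
    (he0 : 0 ≤ e) (he1 : e ≤ 1)
    (hmax : max a (a₂ ^ 2) ≤ 1 - e) (heb : 1 - e ≤ a₂) :
    ∀ s : ℕ, 1 ≤ s →
      0 ≤ e * a₂ ^ 2 * a ^ 2 * Ssum a a₂ (s - 1) ∧
      e * a₂ ^ 2 * a ^ 2 * Ssum a a₂ (s - 1) ≤
        (1 - e) * (1 - Ssum a a₂ (s + 1)) + a₂ ^ 2 * a ^ 2 * Ssum a a₂ s :=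
  T_ge_V_ge_zero_general a a₂ e ha0 he0 hmax
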